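/- For the Pell-Padovan numbers, the determinant det[[R(n+2),R(n+1),R(n)],[R(n+1),R(n),R(n-1)],[R(n),R(n-1),R(n-2)]] equals −4 for all integers n. -/

import Mathlib

/-!
The recurrence says that the Hankel matrix `hankel3 R (n + 1)` is `hankel3 R n` multiplied on
the left by the companion matrix of `x³ - 2x - 1`, whose determinant is the constant
coefficient `1`. So its determinant does not depend on `n`, and the value `-4` at `n = 0` is read
off the values `R (-1) = -1`, `R (-2) = 3` obtained by running the recurrence backwards.
-/

variable {α : Type*} [CommRing α]

def hankel3 (R : ℤ → α) (n : ℤ) : Matrix (Fin 3) (Fin 3) α :=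
  !![R (n + 2), R (n + 1), R n;
     R (n + 1), R n, R (n - 1);
     R n, R (n - 1), R (n - 2)]

theorem hankel3_add_one {R : ℤ → α} {a b c : α}
    (hrec : ∀ n, R n = a * R (n - 1) + b * R (n - 2) + c * R (n - 3)) (n : ℤ) :
    hankel3 R (n + 1) = !![a, b, c; 1, 0, 0; 0, 1, 0] * hankel3 R n := by
  have hnext : R (n + 3) = a * R (n + 2) + b * R (n + 1) + c * R n := by
    simpa [show n + 3 - 1 = n + 2 by ring, show n + 3 - 2 = n + 1 by ring] using hrec (n + 3)
  have hcur : R (n + 2) = a * R (n + 1) + b * R n + c * R (n - 1) := by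
    simpa [show n + 2 - 1 = n + 1 by ring, show n + 2 - 3 = n - 1 by ring] using hrec (n + 2)
  have hprev : R (n + 1) = a * R n + b * R (n - 1) + c * R (n - 2) := by
    simpa [show n + 1 - 2 = n - 1 by ring, show n + 1 - 3 = n - 2 by ring] using hrec (n + 1)
  ext i j
  fin_cases i <;> fin_cases j <;>
    simp [hankel3, Matrix.mul_apply, Fin.sum_univ_three, hnext, hcur, hprev,
      show n + 1 + 2 = n + 3 by ring, show n + 1 + 1 = n + 2 by ring,
      show n + 1 - 2 = n - 1 by ring]

theorem det_hankel3_add_one {R : ℤ → α} {a b c : α}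
    (hrec : ∀ n, R n = a * R (n - 1) + b * R (n - 2) + c * R (n - 3)) (n : ℤ) :
    (hankel3 R (n + 1)).det = c * (hankel3 R n).det := by
  rw [hankel3_add_one hrec, Matrix.det_mul, Matrix.det_fin_three]
  simp

theorem pellPadovan_det (R : ℤ → ℤ) (h0 : R 0 = 1) (h1 : R 1 = 1) (h2 : R 2 = 1)
    (hrec : ∀ n : ℤ, R n = 2 * R (n - 2) + R (n - 3)) :
    ∀ n : ℤ,
      Matrix.det !![R (n + 2), R (n + 1), R n;
                    R (n + 1), R n, R (n - 1);
                    R n, R (n - 1), R (n - 2)] = -4 := by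
  have hrec' : ∀ n, R n = 0 * R (n - 1) + 2 * R (n - 2) + 1 * R (n - 3) := fun n => by
    rw [hrec n]; ring
  have hperiodic : Function.Periodic (fun n => (hankel3 R n).det) 1 := fun n => by
    simp only [det_hankel3_add_one hrec', one_mul]
  have hm1 : R (-1) = -1 := by
    have := hrec 2
    norm_num [h0, h2] at this
    linarith
  have hm2 : R (-2) = 3 := by
    have := hrec 1
    norm_num [h1, hm1] at this
    linarith
  intro n
  calc (hankel3 R n).det = (hankel3 R 0).det := by simpa using hperiodic.int_mul n 0
    _ = -4 := by simp [hankel3, Matrix.det_fin_three, h0, h1, h2, hm1, hm2]
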